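/- arXiv:2006.16068 — 5 statements merged into one kernel-verified Lean document; each statement's English description precedes it below -/
import Mathlib

section
/- Let f : ℝ × ℝ → ℝ be continuously differentiable, let p₀ : ℝ → ℝ be continuously differentiable, and let ψ : ℝ × ℝ → ℝ be twice continuously differentiable and satisfy the transport equation ∂ψ/∂t(x,t) = −f(x,t)·(∂ψ/∂x)(x,t) for all x, t. Define p(x,t) := p₀(ψ(x,t))·(∂ψ/∂x)(x,t). Then p satisfies the continuity equation of Theorem 1 in dimension d = 1: for all x, t, ∂p/∂t(x,t) = −(∂p/∂x)(x,t)·f(x,t) − p(x,t)·(∂f/∂x)(x,t), i.e. ∂p/∂t = −∂/∂x[p·f]. -/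
/-!
Write `ψ₁ = ∂ₓψ`, so that `p = p₀(ψ)·ψ₁`. The product and chain rules express `∂ₜp` and `∂ₓp`
through `∂ₜψ`, `ψ₁`, `∂ₜψ₁` and `∂ₓψ₁`. The transport equation gives `∂ₜψ = -f·ψ₁`, and, since `ψ`
is `C²`, Schwarz's theorem turns it into `∂ₜψ₁ = ∂ₓ∂ₜψ = -∂ₓf·ψ₁ - f·∂ₓψ₁`. After these
substitutions `∂ₜp + ∂ₓp·f + p·∂ₓf` vanishes identically.
-/

noncomputable section PartialDeriv

variable {F : Type*} [NormedAddCommGroup F] [NormedSpace ℝ F] {g : ℝ × ℝ → F} {x t : ℝ}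

def partialFst (g : ℝ × ℝ → F) (z : ℝ × ℝ) : F := deriv (fun u => g (u, z.2)) z.1

def partialSnd (g : ℝ × ℝ → F) (z : ℝ × ℝ) : F := deriv (fun s => g (z.1, s)) z.2

theorem DifferentiableAt.partialFst_eq_fderiv (hg : DifferentiableAt ℝ g (x, t)) :
    partialFst g (x, t) = fderiv ℝ g (x, t) (1, 0) :=
  (hg.hasFDerivAt.comp_hasDerivAt x ((hasDerivAt_id x).prodMk (hasDerivAt_const x t))).deriv

theorem DifferentiableAt.partialSnd_eq_fderiv (hg : DifferentiableAt ℝ g (x, t)) :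
    partialSnd g (x, t) = fderiv ℝ g (x, t) (0, 1) :=
  (hg.hasFDerivAt.comp_hasDerivAt t ((hasDerivAt_const t x).prodMk (hasDerivAt_id t))).deriv

theorem DifferentiableAt.hasDerivAt_partialFst (hg : DifferentiableAt ℝ g (x, t)) :
    HasDerivAt (fun u => g (u, t)) (partialFst g (x, t)) x :=
  (hg.comp x (differentiableAt_id.prodMk (differentiableAt_const t))).hasDerivAt

theorem DifferentiableAt.hasDerivAt_partialSnd (hg : DifferentiableAt ℝ g (x, t)) :
    HasDerivAt (fun s => g (x, s)) (partialSnd g (x, t)) t :=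
  (hg.comp t ((differentiableAt_const x).prodMk differentiableAt_id)).hasDerivAt

theorem partialFst_eq_fderiv (hg : Differentiable ℝ g) :
    partialFst g = fun z => fderiv ℝ g z (1, 0) :=
  funext fun z => (hg z).partialFst_eq_fderiv

theorem partialSnd_eq_fderiv (hg : Differentiable ℝ g) :
    partialSnd g = fun z => fderiv ℝ g z (0, 1) :=
  funext fun z => (hg z).partialSnd_eq_fderiv

theorem contDiff_partialFst {m n : WithTop ℕ∞} (hg : ContDiff ℝ n g) (hmn : m + 1 ≤ n) :
    ContDiff ℝ m (partialFst g) := by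
  rw [partialFst_eq_fderiv ((hg.of_le (le_add_self.trans hmn)).differentiable one_ne_zero)]
  exact (hg.fderiv_right hmn).clm_apply contDiff_const

theorem fderiv_fderiv_apply {E : Type*} [NormedAddCommGroup E] [NormedSpace ℝ E] {g : E → F}
    {z : E} (hg : DifferentiableAt ℝ (fderiv ℝ g) z) (u v : E) :
    fderiv ℝ (fun w => fderiv ℝ g w v) z u = fderiv ℝ (fderiv ℝ g) z u v := by
  change fderiv ℝ (ContinuousLinearMap.apply ℝ F v ∘ fderiv ℝ g) z u = _
  rw [((ContinuousLinearMap.apply ℝ F v).hasFDerivAt.comp z hg.hasFDerivAt).fderiv]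
  rfl

theorem ContDiff.partialSnd_partialFst (hg : ContDiff ℝ 2 g) (z : ℝ × ℝ) :
    partialSnd (partialFst g) z = partialFst (partialSnd g) z := by
  have hg₁ : Differentiable ℝ g := hg.differentiable (by norm_num)
  have hg₂ : Differentiable ℝ (fderiv ℝ g) :=
    (hg.fderiv_right (m := 1) (by norm_num)).differentiable (by norm_num)
  rw [partialFst_eq_fderiv hg₁, partialSnd_eq_fderiv hg₁,
    partialSnd_eq_fderiv (hg₂.clm_apply (differentiable_const _)),
    partialFst_eq_fderiv (hg₂.clm_apply (differentiable_const _))]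
  beta_reduce
  rw [fderiv_fderiv_apply (hg₂ z), fderiv_fderiv_apply (hg₂ z),
    (hg.contDiffAt.isSymmSndFDerivAt (by simp)).eq]

theorem partialFst_neg (g : ℝ × ℝ → F) (z : ℝ × ℝ) :
    partialFst (fun w => -g w) z = -partialFst g z :=
  deriv.neg

theorem partialFst_mul {g₁ g₂ : ℝ × ℝ → ℝ} (hg₁ : DifferentiableAt ℝ g₁ (x, t))
    (hg₂ : DifferentiableAt ℝ g₂ (x, t)) :
    partialFst (fun w => g₁ w * g₂ w) (x, t) =
      partialFst g₁ (x, t) * g₂ (x, t) + g₁ (x, t) * partialFst g₂ (x, t) :=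
  (hg₁.hasDerivAt_partialFst.mul hg₂.hasDerivAt_partialFst).deriv

theorem partialSnd_mul {g₁ g₂ : ℝ × ℝ → ℝ} (hg₁ : DifferentiableAt ℝ g₁ (x, t))
    (hg₂ : DifferentiableAt ℝ g₂ (x, t)) :
    partialSnd (fun w => g₁ w * g₂ w) (x, t) =
      partialSnd g₁ (x, t) * g₂ (x, t) + g₁ (x, t) * partialSnd g₂ (x, t) :=
  (hg₁.hasDerivAt_partialSnd.mul hg₂.hasDerivAt_partialSnd).deriv

theorem partialFst_comp {φ : ℝ → ℝ} {h : ℝ × ℝ → ℝ} (hφ : DifferentiableAt ℝ φ (h (x, t)))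
    (hh : DifferentiableAt ℝ h (x, t)) :
    partialFst (fun w => φ (h w)) (x, t) = deriv φ (h (x, t)) * partialFst h (x, t) :=
  (hφ.hasDerivAt.comp x hh.hasDerivAt_partialFst).deriv

theorem partialSnd_comp {φ : ℝ → ℝ} {h : ℝ × ℝ → ℝ} (hφ : DifferentiableAt ℝ φ (h (x, t)))
    (hh : DifferentiableAt ℝ h (x, t)) :
    partialSnd (fun w => φ (h w)) (x, t) = deriv φ (h (x, t)) * partialSnd h (x, t) :=
  (hφ.hasDerivAt.comp t hh.hasDerivAt_partialSnd).deriv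

end PartialDeriv

/-- One-dimensional rigorous form of Theorem 1: if `ψ(·,t)` transports along the flow of
`dx/dt = f(x,t)` (i.e. `ψ` solves the transport equation `∂ψ/∂t = −f·∂ψ/∂x`), then
`p(x,t) := p₀(ψ(x,t))·∂ψ/∂x(x,t)` satisfies the continuity equation
`∂p/∂t = −∂/∂x[p·f]`. -/
theorem stmt_0
    (f : ℝ × ℝ → ℝ) (p₀ : ℝ → ℝ) (ψ : ℝ × ℝ → ℝ)
    (hf : ContDiff ℝ 1 f) (hp₀ : ContDiff ℝ 1 p₀) (hψ : ContDiff ℝ 2 ψ)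
    (htransport : ∀ x t : ℝ,
      deriv (fun s => ψ (x, s)) t = -(f (x, t)) * deriv (fun u => ψ (u, t)) x)
    (p : ℝ × ℝ → ℝ)
    (hp : ∀ x t : ℝ, p (x, t) = p₀ (ψ (x, t)) * deriv (fun u => ψ (u, t)) x) :
    ∀ x t : ℝ,
      deriv (fun s => p (x, s)) t =
        -(deriv (fun u => p (u, t)) x) * f (x, t)
          - p (x, t) * deriv (fun u => f (u, t)) x := by
  have hfd : Differentiable ℝ f := hf.differentiable one_ne_zero
  have hp₀d : Differentiable ℝ p₀ := hp₀.differentiable one_ne_zero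
  have hψd : Differentiable ℝ ψ := hψ.differentiable (by norm_num)
  have hp₀ψd : Differentiable ℝ (fun z => p₀ (ψ z)) := hp₀d.comp hψd
  have hψ₁d : Differentiable ℝ (partialFst ψ) :=
    (contDiff_partialFst hψ (m := 1) (by norm_num)).differentiable one_ne_zero
  have hψt : partialSnd ψ = fun z => -f z * partialFst ψ z :=
    funext fun z => htransport z.1 z.2
  have hp_eq : p = fun z => p₀ (ψ z) * partialFst ψ z := funext fun z => hp z.1 z.2
  intro x t
  have hmixed : partialSnd (partialFst ψ) (x, t) =
      -partialFst f (x, t) * partialFst ψ (x, t) - f (x, t) * partialFst (partialFst ψ) (x, t) := by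
    rw [hψ.partialSnd_partialFst, hψt, partialFst_mul (g₁ := fun z => -f z) (hfd _).neg (hψ₁d _),
      partialFst_neg]
    ring
  change partialSnd p (x, t) = -partialFst p (x, t) * f (x, t) - p (x, t) * partialFst f (x, t)
  rw [hp_eq, partialSnd_mul (hp₀ψd _) (hψ₁d _), partialFst_mul (hp₀ψd _) (hψ₁d _),
    partialSnd_comp (hp₀d _) (hψd _), partialFst_comp (hp₀d _) (hψd _), hmixed, hψt]
  ring
end

section
/- Let f : ℝ × ℝ → ℝ and p : ℝ × ℝ → ℝ be such that p has a total derivative at every point and satisfies the continuity equation ∂p/∂t(x,t) = −(∂p/∂x)(x,t)·f(x,t) − p(x,t)·(∂f/∂x)(x,t) for all x, t. Let x : ℝ → ℝ be differentiable with x'(t) = f(x(t), t) for all t, and assume s ↦ (∂f/∂x)(x(s), s) is continuous. Then for all t, p(x(t), t) = p(x(0), 0) · exp( −∫₀ᵗ (∂f/∂x)(x(s), s) ds ). -/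
/-!
Along the characteristic `s ↦ (x s, s)` the chain rule turns the continuity equation into the
linear ODE `g' = -a g` for `g s = p (x s, s)` and `a s = ∂f/∂x (x s, s)`. Hence
`g · exp (∫ a)` has derivative zero, so it is constant.
-/

open Real

theorem hasDerivAt_comp_curve_prodMk {E : Type*} [NormedAddCommGroup E] [NormedSpace ℝ E]
    {p : ℝ × ℝ → E} {x : ℝ → ℝ} {v t : ℝ} (hp : DifferentiableAt ℝ p (x t, t))
    (hx : HasDerivAt x v t) :
    HasDerivAt (fun s => p (x s, s))
      (v • deriv (fun u => p (u, t)) (x t) + deriv (fun s => p (x t, s)) t) t := by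
  have hpx : HasDerivAt (fun u => p (u, t)) (fderiv ℝ p (x t, t) (1, 0)) (x t) :=
    hp.hasFDerivAt.comp_hasDerivAt (x t) ((hasDerivAt_id _).prodMk (hasDerivAt_const _ _))
  have hpt : HasDerivAt (fun s => p (x t, s)) (fderiv ℝ p (x t, t) (0, 1)) t :=
    hp.hasFDerivAt.comp_hasDerivAt t ((hasDerivAt_const _ _).prodMk (hasDerivAt_id _))
  have hcurve :=
    hp.hasFDerivAt.comp_hasDerivAt (f := fun s => (x s, s)) t (hx.prodMk (hasDerivAt_id' t))
  have hsplit : ((v, 1) : ℝ × ℝ) = v • ((1 : ℝ), (0 : ℝ)) + ((0 : ℝ), (1 : ℝ)) := by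
    simp
  rw [hpx.deriv, hpt.deriv, ← map_smul, ← map_add, ← hsplit]
  exact hcurve

theorem eq_mul_exp_neg_integral_of_hasDerivAt {g a : ℝ → ℝ} (ha : Continuous a)
    (hg : ∀ s, HasDerivAt g (-(g s * a s)) s) (t₀ t : ℝ) :
    g t = g t₀ * exp (-∫ s in t₀..t, a s) := by
  set A : ℝ → ℝ := fun t => ∫ s in t₀..t, a s
  have hA : ∀ s, HasDerivAt A (a s) s := fun s =>
    (ha.integral_hasStrictDerivAt t₀ s).hasDerivAt
  have hderiv_zero : ∀ s, HasDerivAt (fun s => g s * exp (A s)) 0 s := fun s =>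
    ((hg s).mul (hA s).exp).congr_deriv (by ring)
  have hconst : g t * exp (A t) = g t₀ * exp (A t₀) :=
    is_const_of_deriv_eq_zero (fun s => (hderiv_zero s).differentiableAt)
      (fun s => (hderiv_zero s).deriv) t t₀
  have hA₀ : A t₀ = 0 := intervalIntegral.integral_same
  rw [hA₀, exp_zero, mul_one] at hconst
  calc g t = g t * exp (A t) * exp (-A t) := by
        rw [mul_assoc, ← exp_add, add_neg_cancel, exp_zero, mul_one]
    _ = g t₀ * exp (-A t) := by rw [hconst]

/-- Explicit representation of the density along a characteristic:
`p(x(t),t) = p(x(0),0) · exp(−∫₀ᵗ (∂f/∂x)(x(s),s) ds)`. -/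
theorem stmt_3
    (f p : ℝ × ℝ → ℝ)
    (hp : ∀ z : ℝ × ℝ, DifferentiableAt ℝ p z)
    (hpde : ∀ x t : ℝ,
      deriv (fun s => p (x, s)) t =
        -(deriv (fun u => p (u, t)) x) * f (x, t)
          - p (x, t) * deriv (fun u => f (u, t)) x)
    (x : ℝ → ℝ) (hx : ∀ t, HasDerivAt x (f (x t, t)) t)
    (hcont : Continuous fun s => deriv (fun u => f (u, s)) (x s)) :
    ∀ t : ℝ,
      p (x t, t) = p (x 0, 0) * Real.exp (-∫ s in (0 : ℝ)..t, deriv (fun u => f (u, s)) (x s)) := by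
  refine eq_mul_exp_neg_integral_of_hasDerivAt hcont (fun s => ?_) 0
  have hchain := hasDerivAt_comp_curve_prodMk (hp (x s, s)) (hx s)
  rw [hpde, smul_eq_mul] at hchain
  exact hchain.congr_deriv (by ring)
end

section
/- Let f : ℝ × ℝ → ℝ and p : ℝ × ℝ → ℝ be such that p has a total derivative at every point and satisfies the continuity equation ∂p/∂t(x,t) = −(∂p/∂x)(x,t)·f(x,t) − p(x,t)·(∂f/∂x)(x,t) for all x, t. Let x : ℝ → ℝ be differentiable with x'(t) = f(x(t), t) for all t, and assume s ↦ (∂f/∂x)(x(s), s) is continuous. Then for every t: if p(x(0),0) ≥ 0 then p(x(t),t) ≥ 0; if p(x(0),0) = 0 then p(x(t),t) = 0; and if p(x(0),0) > 0 then p(x(t),t) > 0. -/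
/-!
Along a characteristic the continuity equation collapses, by the chain rule, to the scalar
linear ODE `g' = -(∂ₓf) g` for `g t = p (x t, t)`. Since `∂ₓf` is continuous along the curve,
the integrating factor `exp (∫₀ᵗ ∂ₓf)` exists, so `g t = g 0 * exp (-∫₀ᵗ ∂ₓf)` has the sign of `g 0`.
-/

open Real

theorem DifferentiableAt.hasDerivAt_comp_graph {F : Type*} [NormedAddCommGroup F]
    [NormedSpace ℝ F] {p : ℝ × ℝ → F} {γ : ℝ → ℝ} {v t : ℝ}
    (hp : DifferentiableAt ℝ p (γ t, t)) (hγ : HasDerivAt γ v t) :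
    HasDerivAt (fun s => p (γ s, s))
      (v • deriv (fun u => p (u, t)) (γ t) + deriv (fun s => p (γ t, s)) t) t := by
  set L := fderiv ℝ p (γ t, t)
  have hx : deriv (fun u => p (u, t)) (γ t) = L (1, 0) :=
    (hp.hasFDerivAt.comp_hasDerivAt (γ t)
      ((hasDerivAt_id (γ t)).prodMk (hasDerivAt_const (γ t) t))).deriv
  have ht : deriv (fun s => p (γ t, s)) t = L (0, 1) :=
    (hp.hasFDerivAt.comp_hasDerivAt t
      ((hasDerivAt_const t (γ t)).prodMk (hasDerivAt_id t))).deriv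
  have hsplit : ((v, 1) : ℝ × ℝ) = v • ((1, 0) : ℝ × ℝ) + (0, 1) := by simp
  rw [hx, ht, ← map_smul, ← map_add, ← hsplit]
  exact hp.hasFDerivAt.comp_hasDerivAt_of_eq t (hγ.prodMk (hasDerivAt_id t)) rfl

theorem eq_mul_exp_integral_of_hasDerivAt {g a : ℝ → ℝ} (ha : Continuous a)
    (hg : ∀ t, HasDerivAt g (a t * g t) t) (t₀ t : ℝ) :
    g t = g t₀ * exp (∫ s in t₀..t, a s) := by
  set A : ℝ → ℝ := fun t => ∫ s in t₀..t, a s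
  have hA : ∀ t, HasDerivAt A (a t) t := fun t =>
    (ha.integral_hasStrictDerivAt t₀ t).hasDerivAt
  have hconst : ∀ t, HasDerivAt (fun t => g t * exp (-A t)) 0 t := fun t =>
    ((hg t).mul (hA t).neg.exp).congr_deriv (by ring)
  have heq := is_const_of_deriv_eq_zero (fun t => (hconst t).differentiableAt)
    (fun t => (hconst t).deriv) t t₀
  simp only [A, intervalIntegral.integral_same, neg_zero, exp_zero, mul_one] at heq
  rw [← heq, mul_assoc, ← exp_add, neg_add_cancel, exp_zero, mul_one]

/-- Sign preservation along characteristics for the 1-D continuity equation: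
nonnegativity, vanishing, and strict positivity of the density are preserved along
the trajectory of an agent obeying `dx/dt = f(x,t)`. -/
theorem stmt_4
    (f p : ℝ × ℝ → ℝ)
    (hp : ∀ z : ℝ × ℝ, DifferentiableAt ℝ p z)
    (hpde : ∀ x t : ℝ,
      deriv (fun s => p (x, s)) t =
        -(deriv (fun u => p (u, t)) x) * f (x, t)
          - p (x, t) * deriv (fun u => f (u, t)) x)
    (x : ℝ → ℝ) (hx : ∀ t, HasDerivAt x (f (x t, t)) t)
    (hcont : Continuous fun s => deriv (fun u => f (u, s)) (x s)) :
    ∀ t : ℝ,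
      (0 ≤ p (x 0, 0) → 0 ≤ p (x t, t)) ∧
      (p (x 0, 0) = 0 → p (x t, t) = 0) ∧
      (0 < p (x 0, 0) → 0 < p (x t, t)) := by
  have hchar : ∀ t, HasDerivAt (fun s => p (x s, s))
      (-deriv (fun u => f (u, t)) (x t) * p (x t, t)) t := fun t =>
    ((hp (x t, t)).hasDerivAt_comp_graph (hx t)).congr_deriv
      (by rw [hpde, smul_eq_mul]; ring)
  intro t
  have hsol := eq_mul_exp_integral_of_hasDerivAt hcont.neg hchar 0 t
  refine ⟨fun h0 => ?_, fun h0 => ?_, fun h0 => ?_⟩ <;> rw [hsol]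
  · positivity
  · rw [h0, zero_mul]
  · positivity
end

section
/- Let r₁, r₂ : ℝ → ℝ and let p : ℝ × ℝ → ℝ together with its first-order partial derivatives be continuous on [0,1] × ℝ and satisfy the Cross-learning population PDE ∂p/∂t(π,t) = −∂/∂π[ p(π,t)·π·(1−π)·(r₁(t)−r₂(t)) ] for all π ∈ [0,1] and all t. Fix t and suppose p(π,t) ≥ 0 for all π ∈ [0,1]. Then the derivative of E[π₁(t)] := ∫₀¹ π·p(π,t) dπ at time t is nonnegative if r₁(t) ≥ r₂(t), and nonpositive if r₁(t) ≤ r₂(t). That is, the expected probability of taking the first action changes in the direction of the higher immediate reward. -/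
open Set intervalIntegral MeasureTheory Metric

/-! Differentiating under the integral sign and inserting the PDE, the time derivative of
`∫₀¹ π p(π,t) dπ` is `-∫₀¹ π ∂_π Φ`, where `Φ(π) = π(1-π) p(π,t) (r₁ t - r₂ t)` is the flux.
Integrating by parts, the boundary term vanishes because `Φ(1) = 0`, leaving
`∫₀¹ Φ = (r₁ t - r₂ t) ∫₀¹ π(1-π) p(π,t) dπ`, and `π(1-π) p(π,t) ≥ 0` on `[0,1]`. -/

theorem ContinuousOn.prod_univ_slice {α β γ : Type*} [TopologicalSpace α] [TopologicalSpace β]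
    [TopologicalSpace γ] {f : α × β → γ} {s : Set α} (hf : ContinuousOn f (s ×ˢ univ)) (b : β) :
    ContinuousOn (fun a => f (a, b)) s :=
  hf.comp (by fun_prop) fun _ ha => ⟨ha, trivial⟩

theorem hasDerivAt_intervalIntegral_of_continuousOn {a b : ℝ} {f f' : ℝ × ℝ → ℝ}
    (hf : ContinuousOn f (uIcc a b ×ˢ univ)) (hf' : ContinuousOn f' (uIcc a b ×ˢ univ))
    (hderiv : ∀ x ∈ uIcc a b, ∀ s, HasDerivAt (fun s => f (x, s)) (f' (x, s)) s) (t : ℝ) :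
    HasDerivAt (fun s => ∫ x in a..b, f (x, s)) (∫ x in a..b, f' (x, t)) t := by
  obtain ⟨C, hC⟩ := (isCompact_uIcc.prod (isCompact_closedBall t 1)).exists_bound_of_continuousOn
    (hf'.mono (prod_mono_right (subset_univ _)))
  refine (hasDerivAt_integral_of_dominated_loc_of_deriv_le
    (F := fun s x => f (x, s)) (F' := fun s x => f' (x, s)) (bound := fun _ => C)
    (ball_mem_nhds t one_pos) ?_ ((hf.prod_univ_slice t).intervalIntegrable)
    (((hf'.prod_univ_slice t).mono uIoc_subset_uIcc).aestronglyMeasurable measurableSet_uIoc) ?_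
    intervalIntegrable_const ?_).2
  · exact Filter.Eventually.of_forall fun s =>
      ((hf.prod_univ_slice s).mono uIoc_subset_uIcc).aestronglyMeasurable measurableSet_uIoc
  · exact ae_of_all _ fun x hx s hs => hC (x, s) ⟨uIoc_subset_uIcc hx, ball_subset_closedBall hs⟩
  · exact ae_of_all _ fun x hx s _ => hderiv x (uIoc_subset_uIcc hx) s

theorem integral_id_mul_eq_neg_integral_of_hasDerivAt {G g : ℝ → ℝ}
    (hG : ∀ x ∈ uIcc (0 : ℝ) 1, HasDerivAt G (g x) x) (hg : IntervalIntegrable g volume 0 1)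
    (hG1 : G 1 = 0) :
    ∫ x in (0 : ℝ)..1, x * g x = -∫ x in (0 : ℝ)..1, G x := by
  rw [integral_mul_deriv_eq_deriv_mul (fun x _ => hasDerivAt_id' x) hG intervalIntegrable_const hg]
  simp [hG1]

theorem stmt_7_general
    (r₁ r₂ : ℝ → ℝ) (p px pt : ℝ × ℝ → ℝ)
    (hpx : ∀ x t : ℝ, HasDerivAt (fun u => p (u, t)) (px (x, t)) x)
    (hpt : ∀ x t : ℝ, HasDerivAt (fun s => p (x, s)) (pt (x, t)) t)
    (hpc : ContinuousOn p (Set.Icc 0 1 ×ˢ Set.univ))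
    (hptc : ContinuousOn pt (Set.Icc 0 1 ×ˢ Set.univ))
    (hpde : ∀ π ∈ Set.Icc (0 : ℝ) 1, ∀ s : ℝ,
      pt (π, s) =
        -(px (π, s) * (π * (1 - π) * (r₁ s - r₂ s))
            + p (π, s) * ((1 - 2 * π) * (r₁ s - r₂ s))))
    (t : ℝ) (hnn : ∀ π ∈ Set.Icc (0 : ℝ) 1, 0 ≤ p (π, t)) :
    (r₂ t ≤ r₁ t → 0 ≤ deriv (fun s => ∫ π in (0 : ℝ)..1, π * p (π, s)) t) ∧
    (r₁ t ≤ r₂ t → deriv (fun s => ∫ π in (0 : ℝ)..1, π * p (π, s)) t ≤ 0) := by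
  rw [← uIcc_of_le zero_le_one] at hpc hptc hpde
  have hmean := hasDerivAt_intervalIntegral_of_continuousOn
    (f := fun z => z.1 * p z) (f' := fun z => z.1 * pt z) (continuousOn_fst.mul hpc)
    (continuousOn_fst.mul hptc) (fun x _ s => (hpt x s).const_mul x) t
  set Δ := r₁ t - r₂ t
  have hflux : ∀ π ∈ uIcc (0 : ℝ) 1,
      HasDerivAt (fun x => -(x * (1 - x) * p (x, t) * Δ)) (pt (π, t)) π := by
    intro π hπ
    rw [hpde π hπ t]
    exact ((((hasDerivAt_id' π).mul ((hasDerivAt_id' π).const_sub 1)).mul (hpx π t)).mul_const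
      Δ).neg.congr_deriv (by simp only [Pi.mul_apply, Δ]; ring)
  have hparts := integral_id_mul_eq_neg_integral_of_hasDerivAt hflux
    ((hptc.prod_univ_slice t).intervalIntegrable) (by simp)
  rw [hmean.deriv, hparts, intervalIntegral.integral_neg, neg_neg,
    intervalIntegral.integral_mul_const]
  have hI : 0 ≤ ∫ π in (0 : ℝ)..1, π * (1 - π) * p (π, t) :=
    integral_nonneg zero_le_one fun π hπ =>
      mul_nonneg (mul_nonneg hπ.1 (sub_nonneg.2 hπ.2)) (hnn π hπ)
  exact ⟨fun hr => mul_nonneg hI (sub_nonneg.2 hr),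
    fun hr => mul_nonpos_of_nonneg_of_nonpos hI (sub_nonpos.2 hr)⟩

/-- The expected probability of taking the first action changes in the direction of the
higher immediate reward: if `p(·,t) ≥ 0` on `[0,1]`, then the derivative of
`E[π₁(t)] = ∫₀¹ π·p(π,t) dπ` at `t` is nonnegative when `r₁(t) ≥ r₂(t)` and
nonpositive when `r₁(t) ≤ r₂(t)`. -/
theorem stmt_7
    (r₁ r₂ : ℝ → ℝ) (p px pt : ℝ × ℝ → ℝ)
    (hpx : ∀ x t : ℝ, HasDerivAt (fun u => p (u, t)) (px (x, t)) x)
    (hpt : ∀ x t : ℝ, HasDerivAt (fun s => p (x, s)) (pt (x, t)) t)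
    (hpc : ContinuousOn p (Set.Icc 0 1 ×ˢ Set.univ))
    (hpxc : ContinuousOn px (Set.Icc 0 1 ×ˢ Set.univ))
    (hptc : ContinuousOn pt (Set.Icc 0 1 ×ˢ Set.univ))
    (hpde : ∀ π ∈ Set.Icc (0 : ℝ) 1, ∀ s : ℝ,
      pt (π, s) =
        -(px (π, s) * (π * (1 - π) * (r₁ s - r₂ s))
            + p (π, s) * ((1 - 2 * π) * (r₁ s - r₂ s))))
    (t : ℝ) (hnn : ∀ π ∈ Set.Icc (0 : ℝ) 1, 0 ≤ p (π, t)) :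
    (r₂ t ≤ r₁ t → 0 ≤ deriv (fun s => ∫ π in (0 : ℝ)..1, π * p (π, s)) t) ∧
    (r₁ t ≤ r₂ t → deriv (fun s => ∫ π in (0 : ℝ)..1, π * p (π, s)) t ≤ 0) :=
  stmt_7_general r₁ r₂ p px pt hpx hpt hpc hptc hpde t hnn
end

section
/- Let r₁, r₂ : ℝ → ℝ and let p : ℝ × ℝ → ℝ together with its first-order partial derivatives be continuous on [0,1] × ℝ and satisfy the Cross-learning population PDE ∂p/∂t(π,t) = −∂/∂π[ p(π,t)·π·(1−π)·(r₁(t)−r₂(t)) ] for all π ∈ [0,1] and all t. Fix t and suppose p(π,t) ≥ 0 for all π ∈ [0,1] and ∫₀¹ p(π,t) dπ = 1. Then the derivative of E[π₁(t)] := ∫₀¹ π·p(π,t) dπ at time t satisfies |d/dt E[π₁(t)]| ≤ |r₁(t) − r₂(t)| / 4. -/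
/-!
Differentiating under the integral sign and integrating the PDE by parts against `π`
(the flux `π (1 - π) (r₁ - r₂) p` vanishes at `π = 0` and `π = 1`) gives
`d/dt E[π₁(t)] = (r₁(t) - r₂(t)) ∫₀¹ π (1 - π) p(π, t) dπ`.
As `0 ≤ π (1 - π) ≤ 1/4` on `[0, 1]` and `p(·, t)` is a probability density on `[0, 1]`,
the integral lies in `[0, 1/4]`.
-/

open Set MeasureTheory

theorem ContinuousOn.comp_prodMk_const {X Y Z : Type*} [TopologicalSpace X] [TopologicalSpace Y]
    [TopologicalSpace Z] {s : Set X} {f : X × Y → Z}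
    (hf : ContinuousOn f (s ×ˢ univ)) (t : Y) : ContinuousOn (fun x => f (x, t)) s :=
  hf.comp (by fun_prop) fun _ hx => ⟨hx, mem_univ t⟩

theorem hasDerivAt_intervalIntegral_of_continuousOn_partialDeriv {E : Type*}
    [NormedAddCommGroup E] [NormedSpace ℝ E] [CompleteSpace E]
    {a b : ℝ} {p pt : ℝ × ℝ → E} (hp : ContinuousOn p (uIcc a b ×ˢ univ))
    (hpt : ∀ x ∈ uIcc a b, ∀ s, HasDerivAt (fun s => p (x, s)) (pt (x, s)) s)
    (hptc : ContinuousOn pt (uIcc a b ×ˢ univ)) (t : ℝ) :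
    HasDerivAt (fun s => ∫ x in a..b, p (x, s)) (∫ x in a..b, pt (x, t)) t := by
  obtain ⟨C, hC⟩ := (isCompact_uIcc.prod (isCompact_closedBall t 1)).exists_bound_of_continuousOn
    (hptc.mono (prod_mono_right (subset_univ _)))
  refine (intervalIntegral.hasDerivAt_integral_of_dominated_loc_of_deriv_le
    (F := fun s x => p (x, s)) (F' := fun s x => pt (x, s)) (μ := volume) (bound := fun _ => C)
    (Metric.closedBall_mem_nhds t one_pos) ?_ ?_ ?_ ?_ intervalIntegrable_const ?_).2
  · exact .of_forall fun s =>
      ((hp.comp_prodMk_const s).mono uIoc_subset_uIcc).aestronglyMeasurable measurableSet_uIoc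
  · exact (hp.comp_prodMk_const t).intervalIntegrable
  · exact ((hptc.comp_prodMk_const t).mono uIoc_subset_uIcc).aestronglyMeasurable
      measurableSet_uIoc
  · exact .of_forall fun x hx s hs => hC (x, s) ⟨uIoc_subset_uIcc hx, hs⟩
  · exact .of_forall fun x hx s _ => hpt x (uIoc_subset_uIcc hx) s

theorem abs_intervalIntegral_mul_le_of_density {a b M : ℝ} (hab : a ≤ b) {w u : ℝ → ℝ}
    (hu : IntervalIntegrable u volume a b) (hwM : ∀ x ∈ Icc a b, |w x| ≤ M)
    (hu₀ : ∀ x ∈ Icc a b, 0 ≤ u x) (hmass : ∫ x in a..b, u x = 1) :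
    |∫ x in a..b, w x * u x| ≤ M := by
  have hbound : ∀ x ∈ Ioc a b, ‖w x * u x‖ ≤ M * u x := fun x hx => by
    rw [Real.norm_eq_abs, abs_mul, abs_of_nonneg (hu₀ x (Ioc_subset_Icc_self hx))]
    exact mul_le_mul_of_nonneg_right (hwM x (Ioc_subset_Icc_self hx))
      (hu₀ x (Ioc_subset_Icc_self hx))
  calc |∫ x in a..b, w x * u x|
      ≤ ∫ x in a..b, M * u x :=
        intervalIntegral.norm_integral_le_of_norm_le hab (.of_forall hbound) (hu.const_mul M)
    _ = M := by rw [intervalIntegral.integral_const_mul, hmass, mul_one]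

theorem integral_id_mul_eq_of_crossLearning {u ux ut : ℝ → ℝ} {c : ℝ}
    (hux : ∀ x ∈ Icc (0 : ℝ) 1, HasDerivAt u (ux x) x) (hut : ContinuousOn ut (Icc 0 1))
    (hpde : ∀ x ∈ Icc (0 : ℝ) 1,
      ut x = -(ux x * (x * (1 - x) * c) + u x * ((1 - 2 * x) * c))) :
    ∫ x in (0 : ℝ)..1, x * ut x = c * ∫ x in (0 : ℝ)..1, x * (1 - x) * u x := by
  have hu : ContinuousOn u (Icc 0 1) := fun x hx => (hux x hx).continuousAt.continuousWithinAt
  have hflux : ∀ x ∈ uIcc (0 : ℝ) 1, HasDerivAt (fun x => (x ^ 2 - x ^ 3) * c * u x)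
      (c * (x * (1 - x) * u x) - x * ut x) x := by
    intro x hx
    rw [uIcc_of_le zero_le_one] at hx
    have hpoly : HasDerivAt (fun x : ℝ => (x ^ 2 - x ^ 3) * c) ((2 * x - 3 * x ^ 2) * c) x := by
      simpa using ((hasDerivAt_pow 2 x).sub (hasDerivAt_pow 3 x)).mul_const c
    refine (hpoly.mul (hux x hx)).congr_deriv ?_
    rw [hpde x hx]
    ring
  have hint₁ : IntervalIntegrable (fun x => c * (x * (1 - x) * u x)) volume 0 1 :=
    ContinuousOn.intervalIntegrable_of_Icc zero_le_one (by fun_prop)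
  have hint₂ : IntervalIntegrable (fun x => x * ut x) volume 0 1 :=
    (continuousOn_id.mul hut).intervalIntegrable_of_Icc zero_le_one
  have hzero := intervalIntegral.integral_eq_sub_of_hasDerivAt hflux (hint₁.sub hint₂)
  rw [intervalIntegral.integral_sub hint₁ hint₂, intervalIntegral.integral_const_mul] at hzero
  norm_num at hzero
  linarith

theorem stmt_8_general
    (r₁ r₂ : ℝ → ℝ) (p px pt : ℝ × ℝ → ℝ)
    (hpx : ∀ x t : ℝ, HasDerivAt (fun u => p (u, t)) (px (x, t)) x)
    (hpt : ∀ x t : ℝ, HasDerivAt (fun s => p (x, s)) (pt (x, t)) t)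
    (hpc : ContinuousOn p (Set.Icc 0 1 ×ˢ Set.univ))
    (hptc : ContinuousOn pt (Set.Icc 0 1 ×ˢ Set.univ))
    (hpde : ∀ π ∈ Set.Icc (0 : ℝ) 1, ∀ s : ℝ,
      pt (π, s) =
        -(px (π, s) * (π * (1 - π) * (r₁ s - r₂ s))
            + p (π, s) * ((1 - 2 * π) * (r₁ s - r₂ s))))
    (t : ℝ) (hnn : ∀ π ∈ Set.Icc (0 : ℝ) 1, 0 ≤ p (π, t))
    (hmass : ∫ π in (0 : ℝ)..1, p (π, t) = 1) :
    |deriv (fun s => ∫ π in (0 : ℝ)..1, π * p (π, s)) t| ≤ |r₁ t - r₂ t| / 4 := by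
  have hIcc : uIcc (0 : ℝ) 1 = Icc 0 1 := uIcc_of_le zero_le_one
  have hmoment := hasDerivAt_intervalIntegral_of_continuousOn_partialDeriv
    (p := fun z => z.1 * p z) (pt := fun z => z.1 * pt z)
    (by rw [hIcc]; exact continuous_fst.continuousOn.mul hpc)
    (fun x _ s => (hpt x s).const_mul x)
    (by rw [hIcc]; exact continuous_fst.continuousOn.mul hptc) t
  have hvariance : ∀ x ∈ Icc (0 : ℝ) 1, |x * (1 - x)| ≤ 1 / 4 := fun x hx => by
    rw [abs_of_nonneg (mul_nonneg hx.1 (sub_nonneg.2 hx.2))]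
    nlinarith [sq_nonneg (x - 1 / 2)]
  have hbound := abs_intervalIntegral_mul_le_of_density zero_le_one
    ((hpc.comp_prodMk_const t).intervalIntegrable_of_Icc zero_le_one) hvariance hnn hmass
  rw [hmoment.deriv, integral_id_mul_eq_of_crossLearning (fun x _ => hpx x t)
    (hptc.comp_prodMk_const t) (fun x hx => hpde x hx t), abs_mul]
  calc |r₁ t - r₂ t| * |∫ x in (0 : ℝ)..1, x * (1 - x) * p (x, t)|
      ≤ |r₁ t - r₂ t| * (1 / 4) := by gcongr
    _ = |r₁ t - r₂ t| / 4 := by ring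

/-- Quantified version of the paper's observation on the magnitude of the drift of the
expected probability: if `p(·,t)` is a probability density on `[0,1]`, then
`|d/dt E[π₁(t)]| ≤ |r₁(t) − r₂(t)| / 4`, since `|π(π−1)| ≤ 1/4` on `[0,1]`. -/
theorem stmt_8
    (r₁ r₂ : ℝ → ℝ) (p px pt : ℝ × ℝ → ℝ)
    (hpx : ∀ x t : ℝ, HasDerivAt (fun u => p (u, t)) (px (x, t)) x)
    (hpt : ∀ x t : ℝ, HasDerivAt (fun s => p (x, s)) (pt (x, t)) t)
    (hpc : ContinuousOn p (Set.Icc 0 1 ×ˢ Set.univ))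
    (hpxc : ContinuousOn px (Set.Icc 0 1 ×ˢ Set.univ))
    (hptc : ContinuousOn pt (Set.Icc 0 1 ×ˢ Set.univ))
    (hpde : ∀ π ∈ Set.Icc (0 : ℝ) 1, ∀ s : ℝ,
      pt (π, s) =
        -(px (π, s) * (π * (1 - π) * (r₁ s - r₂ s))
            + p (π, s) * ((1 - 2 * π) * (r₁ s - r₂ s))))
    (t : ℝ) (hnn : ∀ π ∈ Set.Icc (0 : ℝ) 1, 0 ≤ p (π, t))
    (hmass : ∫ π in (0 : ℝ)..1, p (π, t) = 1) :
    |deriv (fun s => ∫ π in (0 : ℝ)..1, π * p (π, s)) t| ≤ |r₁ t - r₂ t| / 4 :=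
  stmt_8_general r₁ r₂ p px pt hpx hpt hpc hptc hpde t hnn hmass
end
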